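/- In the λ-snapshot method for counting 1-bits in a sliding window, if the true number of 1-bits in the current window is m, then the estimate v(S) = |Q|·λ + ℓ satisfies m ≤ v(S) ≤ m + 2λ. -/
import Mathlib

private lemma ones_split8 (b : ℕ → Bool) (q p : ℕ) (h : q ≤ p) :
    ((Finset.Icc 1 p).filter (fun i => b i)).card
      = ((Finset.Icc 1 q).filter (fun i => b i)).card
        + ((Finset.Icc (q+1) p).filter (fun i => b i)).card := by
  have hset : Finset.Icc 1 p = Finset.Icc 1 q ∪ Finset.Icc (q+1) p := by
    ext i
    simp only [Finset.mem_union, Finset.mem_Icc]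
    omega
  rw [hset, Finset.filter_union, Finset.card_union_of_disjoint]
  simp only [Finset.disjoint_left, Finset.mem_filter, Finset.mem_Icc]
  rintro a ⟨h1, -⟩ ⟨h2, -⟩
  omega

/-- λ-snapshot guarantee: for a bit stream `b`, current time `T`,
window size `N ≤ T`, with `ones t` the number of 1-bits among positions `1..t`,
`Q` the set of λ-block indices that contain a sampled 1-bit (every λ-th 1-bit is
sampled) and are not entirely expired from the window, and `ℓ` the number of
1-bits since the last sample, the estimate `v(S) = |Q|·λ + ℓ` satisfies
`m ≤ v(S) ≤ m + 2λ` where `m` is the exact number of 1-bits in the window. -/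
theorem stmt8 (lam N T : ℕ) (hlam : 0 < lam) (hTN : N ≤ T)
    (b : ℕ → Bool)
    (ones : ℕ → ℕ)
    (hones : ∀ t, ones t = ((Finset.Icc 1 t).filter (fun i => b i)).card)
    (Q : Finset ℕ)
    (hQ : ∀ j, j ∈ Q ↔
        (∃ p ∈ Finset.Icc 1 T, b p = true ∧ lam ∣ ones p ∧ (p - 1) / lam = j) ∧
        T - N + 1 ≤ (j + 1) * lam)
    (ℓ m : ℕ) (hℓ : ℓ = ones T % lam) (hm : m = ones T - ones (T - N)) :
    m ≤ Q.card * lam + ℓ ∧ Q.card * lam + ℓ ≤ m + 2 * lam := by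
  -- basic properties of `ones`
  have hone : ∀ q p, q ≤ p →
      ones p = ones q + ((Finset.Icc (q+1) p).filter (fun i => b i)).card := by
    intro q p h
    rw [hones, hones]
    exact ones_split8 b q p h
  have hmono : ∀ q p, q ≤ p → ones q ≤ ones p := by
    intro q p h
    rw [hone q p h]
    exact Nat.le_add_right _ _
  have hdiff : ∀ q p, q ≤ p → ones p ≤ ones q + (p - q) := by
    intro q p h
    rw [hone q p h]
    have h1 : ((Finset.Icc (q+1) p).filter (fun i => b i)).card ≤ (Finset.Icc (q+1) p).card :=
      Finset.card_filter_le _ _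
    rw [Nat.card_Icc] at h1
    omega
  have hstep : ∀ p, 1 ≤ p → ones p = ones (p-1) + (if b p = true then 1 else 0) := by
    intro p hp
    rw [hone (p-1) p (by omega)]
    congr 1
    have he : Finset.Icc (p-1+1) p = {p} := by
      have : p - 1 + 1 = p := by omega
      rw [this, Finset.Icc_self]
    rw [he, Finset.filter_singleton]
    by_cases hb : b p = true <;> simp [hb]
  have h0 : ones 0 = 0 := by
    rw [hones]; simp
  set K := ones T / lam with hK
  have hKlam : K * lam ≤ ones T := Nat.div_mul_le_self _ _
  have hℓlt : ℓ < lam := by rw [hℓ]; exact Nat.mod_lt _ hlam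
  have honesT : ones T = K * lam + ℓ := by
    rw [hℓ, hK]
    have := Nat.div_add_mod (ones T) lam
    have h2 : ones T / lam * lam = lam * (ones T / lam) := Nat.mul_comm _ _
    omega
  -- sample positions
  have hPex : ∀ k : ℕ, ∃ p, min (k * lam) (ones T) ≤ ones p :=
    fun k => ⟨T, min_le_right _ _⟩
  set P : ℕ → ℕ := fun k => Nat.find (hPex k) with hPdef
  have hmin_eq : ∀ k, k ≤ K → min (k*lam) (ones T) = k*lam := by
    intro k hk
    exact min_eq_left (le_trans (Nat.mul_le_mul_right lam hk) hKlam)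
  have hPspec : ∀ k, k ≤ K → k * lam ≤ ones (P k) := by
    intro k hk
    have h' : min (k * lam) (ones T) ≤ ones (P k) := Nat.find_spec (hPex k)
    exact le_trans (hmin_eq k hk).ge h' 
  have hPle : ∀ k, k ≤ K → ∀ p, k*lam ≤ ones p → P k ≤ p := by
    intro k hk p hp
    exact Nat.find_le (by rw [hmin_eq k hk]; exact hp)
  have hP1 : ∀ k, 1 ≤ k → k ≤ K → 1 ≤ P k := by
    intro k h1 hk
    by_contra h
    have hPk : P k = 0 := by omega
    have := hPspec k hk
    rw [hPk, h0] at this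
    have : 1 * lam ≤ k * lam := Nat.mul_le_mul_right lam h1
    omega
  have hPprev : ∀ k, 1 ≤ k → k ≤ K → ones (P k - 1) < k * lam := by
    intro k h1 hk
    have hp1 := hP1 k h1 hk
    have hmin' : ¬ (min (k * lam) (ones T) ≤ ones (P k - 1)) :=
      Nat.find_min (hPex k) (show P k - 1 < P k by omega)
    rw [hmin_eq k hk] at hmin'
    omega
  have hPones : ∀ k, 1 ≤ k → k ≤ K → ones (P k) = k * lam ∧ b (P k) = true := by
    intro k h1 hk
    have hge := hPspec k hk
    have hp1 := hP1 k h1 hk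
    have hlt := hPprev k h1 hk
    have hst := hstep (P k) hp1
    by_cases hb : b (P k) = true
    · rw [if_pos hb] at hst
      exact ⟨by omega, hb⟩
    · rw [if_neg hb] at hst
      omega
  have hPleT : ∀ k, k ≤ K → P k ≤ T := by
    intro k hk
    exact hPle k hk T (le_trans (Nat.mul_le_mul_right lam hk) hKlam)
  have hPuniq : ∀ k p, 1 ≤ k → k ≤ K → 1 ≤ p → b p = true → ones p = k*lam → p = P k := by
    intro k p h1 hk hp1 hb hop
    have hle : P k ≤ p := hPle k hk p (le_of_eq hop.symm)
    rcases Nat.eq_or_lt_of_le hle with h | h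
    · omega
    · exfalso
      have h2 : P k ≤ p - 1 := by omega
      have h3 : ones (P k) ≤ ones (p - 1) := hmono _ _ h2
      have h4 := (hPones k h1 hk).1
      have h5 := hstep p hp1
      rw [if_pos hb] at h5
      omega
  have hPmono : ∀ k k', 1 ≤ k → k < k' → k' ≤ K → P k + lam ≤ P k' := by
    intro k k' h1 hkk hk'
    have hkK : k ≤ K := by omega
    have o1 := (hPones k h1 hkK).1
    have o2 := (hPones k' (by omega) hk').1
    have hle : P k ≤ P k' := hPle k hkK (P k') (by rw [o2]; exact Nat.mul_le_mul_right lam (by omega))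
    have hd := hdiff (P k) (P k') hle
    have hmul : (k+1)*lam ≤ k'*lam := Nat.mul_le_mul_right lam (by omega)
    rw [Nat.add_mul, Nat.one_mul] at hmul
    omega
  have hjmono : ∀ k k', 1 ≤ k → k < k' → k' ≤ K → (P k - 1)/lam < (P k' - 1)/lam := by
    intro k k' h1 hkk hk'
    have hPm := hPmono k k' h1 hkk hk'
    have hp1 := hP1 k h1 (by omega)
    have hdle : (P k - 1 + lam) / lam ≤ (P k' - 1)/lam := Nat.div_le_div_right (by omega)
    rw [Nat.add_div_right _ hlam] at hdle
    omega
  -- block containment facts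
  have hblock_hi : ∀ p, p ≤ ((p - 1)/lam + 1) * lam := by
    intro p
    have h1 := Nat.div_add_mod' (p-1) lam
    have h2 : (p-1) % lam < lam := Nat.mod_lt _ hlam
    have h3 : ((p-1)/lam + 1) * lam = (p-1)/lam * lam + lam := by ring
    omega
  have hblock_lo : ∀ p, (p - 1)/lam * lam ≤ p - 1 := fun p => Nat.div_mul_le_self _ _
  -- the index set S
  set S : Finset ℕ :=
    (Finset.Icc 1 K).filter (fun k => T - N + 1 ≤ ((P k - 1)/lam + 1) * lam) with hS
  have hQeq : Q = S.image (fun k => (P k - 1)/lam) := by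
    ext j
    rw [hQ j]
    simp only [hS, Finset.mem_image, Finset.mem_filter, Finset.mem_Icc]
    constructor
    · rintro ⟨⟨p, hp, hb, ⟨k, hk⟩, hj⟩, hexp⟩
      have hpos : 1 ≤ ones p := by
        have := hstep p hp.1
        rw [if_pos hb] at this
        omega
      have hk1 : 1 ≤ k := by
        rcases Nat.eq_zero_or_pos k with h | h
        · rw [h, Nat.mul_zero] at hk; omega
        · exact h
      have hkK : k ≤ K := by
        rw [hK]
        rw [Nat.le_div_iff_mul_le hlam]
        calc k * lam = lam * k := Nat.mul_comm _ _
          _ = ones p := hk.symm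
          _ ≤ ones T := hmono _ _ hp.2
      have hpk : p = P k := hPuniq k p hk1 hkK hp.1 hb (by rw [hk, Nat.mul_comm])
      refine ⟨k, ⟨⟨hk1, hkK⟩, ?_⟩, ?_⟩
      · rw [← hpk, hj]; exact hexp
      · rw [← hpk]; exact hj
    · rintro ⟨k, ⟨⟨hk1, hkK⟩, hexp⟩, hj⟩
      obtain ⟨ho, hb⟩ := hPones k hk1 hkK
      refine ⟨⟨P k, ⟨hP1 k hk1 hkK, hPleT k hkK⟩, hb,
        ⟨k, by rw [ho, Nat.mul_comm]⟩, hj⟩, ?_⟩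
      rw [← hj]; exact hexp
  have hcard : Q.card = S.card := by
    rw [hQeq]
    apply Finset.card_image_of_injOn
    intro k hk k' hk' hjj
    simp only [hS, Finset.coe_filter, Finset.mem_Icc, Set.mem_setOf_eq] at hk hk'
    have hjj' : (P k - 1)/lam = (P k' - 1)/lam := hjj
    by_contra hne
    rcases Nat.lt_or_ge k k' with h | h
    · have := hjmono k k' hk.1.1 h hk'.1.2
      omega
    · have hlt : k' < k := by omega
      have := hjmono k' k hk'.1.1 hlt hk.1.2
      omega
  have hSsub : S ⊆ Finset.Icc 1 K := Finset.filter_subset _ _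
  have hSK : S.card ≤ K := by
    have := Finset.card_le_card hSsub
    rwa [Nat.card_Icc, Nat.add_sub_cancel] at this
  set w := ones (T - N) with hw
  have hwT : w ≤ ones T := hmono _ _ (by omega)
  -- lower bound: (K - S.card) * lam ≤ w
  have hlow : (K - S.card) * lam ≤ w := by
    have hEsub : (Finset.Icc 1 K) \ S ⊆ Finset.Icc 1 (w / lam) := by
      intro k hk
      rw [Finset.mem_sdiff] at hk
      obtain ⟨hkI, hkS⟩ := hk
      rw [Finset.mem_Icc] at hkI
      have hkc : ¬ (T - N + 1 ≤ ((P k - 1)/lam + 1) * lam) := by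
        intro hc
        exact hkS (by rw [hS]; exact Finset.mem_filter.mpr ⟨Finset.mem_Icc.mpr hkI, hc⟩)
      have hPle' : P k ≤ T - N := by
        have := hblock_hi (P k)
        omega
      have hko : ones (P k) = k * lam := (hPones k hkI.1 hkI.2).1
      have : k * lam ≤ w := by
        rw [← hko, hw]
        exact hmono _ _ hPle'
      rw [Finset.mem_Icc]
      exact ⟨hkI.1, (Nat.le_div_iff_mul_le hlam).mpr this⟩
    have hEcard : ((Finset.Icc 1 K) \ S).card = K - S.card := by
      rw [Finset.card_sdiff_of_subset hSsub, Nat.card_Icc, Nat.add_sub_cancel]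
    have h1 := Finset.card_le_card hEsub
    rw [hEcard, Nat.card_Icc, Nat.add_sub_cancel] at h1
    calc (K - S.card) * lam ≤ (w / lam) * lam := Nat.mul_le_mul_right lam h1
      _ ≤ w := Nat.div_mul_le_self _ _
  have hsubmul : (K - S.card) * lam = K * lam - S.card * lam := Nat.sub_mul _ _ _
  have hble : S.card * lam ≤ K * lam := Nat.mul_le_mul_right lam hSK
  constructor
  · -- m ≤ v
    rw [hcard]
    omega
  · -- v ≤ m + 2λ
    rw [hcard]
    by_cases h2 : 2 ≤ S.card
    · have hSne : S.Nonempty := Finset.card_pos.mp (by omega)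
      set s := S.min' hSne with hs
      set S' := S.erase s with hS'
      have hS'card : S'.card = S.card - 1 := Finset.card_erase_of_mem (S.min'_mem hSne)
      have hS'ne : S'.Nonempty := Finset.card_pos.mp (by omega)
      set s2 := S'.min' hS'ne with hs2
      have hs2S' : s2 ∈ S' := S'.min'_mem hS'ne
      have hs2S : s2 ∈ S := Finset.mem_of_mem_erase hs2S'
      have hsS : s ∈ S := S.min'_mem hSne
      have hs2ne : s2 ≠ s := Finset.ne_of_mem_erase hs2S'
      have hslt : s < s2 := lt_of_le_of_ne (S.min'_le s2 hs2S) (Ne.symm hs2ne)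
      rw [hS, Finset.mem_filter, Finset.mem_Icc] at hsS hs2S
      -- w + 1 ≤ s2 * lam
      have hj := hjmono s s2 hsS.1.1 hslt hs2S.1.2
      have hwin : T - N + 1 ≤ P s2 - 1 := by
        have h1 : ((P s - 1)/lam + 1) * lam ≤ ((P s2 - 1)/lam) * lam :=
          Nat.mul_le_mul_right lam (by omega)
        have h2 := hblock_lo (P s2)
        have h3 := hsS.2
        omega
      obtain ⟨ho2, hb2⟩ := hPones s2 hs2S.1.1 hs2S.1.2
      have hp21 : 1 ≤ P s2 := hP1 s2 hs2S.1.1 hs2S.1.2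
      have hprev : ones (P s2 - 1) + 1 = s2 * lam := by
        have := hstep (P s2) hp21
        rw [if_pos hb2] at this
        omega
      have hw2 : w + 1 ≤ s2 * lam := by
        have : w ≤ ones (P s2 - 1) := hmono _ _ (by omega)
        omega
      -- S.card + s2 ≤ K + 2
      have hScard2 : S.card ≤ K - s2 + 2 := by
        have hsub2 : S ⊆ insert s (Finset.Icc s2 K) := by
          intro k hk
          rcases eq_or_ne k s with h | h
          · rw [h]; exact Finset.mem_insert_self _ _
          · apply Finset.mem_insert_of_mem
            have hk' : k ∈ S' := Finset.mem_erase.mpr ⟨h, hk⟩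
            have h1 : s2 ≤ k := S'.min'_le k hk'
            have h2 : k ≤ K := (Finset.mem_Icc.mp (hSsub hk)).2
            exact Finset.mem_Icc.mpr ⟨h1, h2⟩
        have := Finset.card_le_card hsub2
        have hins := Finset.card_insert_le s (Finset.Icc s2 K)
        rw [Nat.card_Icc] at hins
        omega
      have hs2K : s2 ≤ K := hs2S.1.2
      have hmul2 : (S.card + s2) * lam ≤ (K + 2) * lam :=
        Nat.mul_le_mul_right lam (by omega)
      rw [Nat.add_mul, Nat.add_mul] at hmul2
      omega
    · -- S.card ≤ 1
      have : S.card * lam ≤ 1 * lam := Nat.mul_le_mul_right lam (by omega)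
      rw [Nat.one_mul] at this
      omega
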